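/- arXiv:2309.09956 — 2 statements merged into one kernel-verified Lean document; each statement's English description precedes it below -/
import Mathlib

section
/- If a graph G of order n is k-vertex-minor universal, then 3^{n-k} ≥ 2^{(k²-5k)/2 - 1}, and consequently k < √(2n·log₂3) + 2. -/
/-- Local complementation of `G` at vertex `v`. -/
def localComplement {V : Type*} (G : SimpleGraph V) (v : V) : SimpleGraph V where
  Adj a b :=
    (G.Adj v a ∧ G.Adj v b ∧ a ≠ b ∧ ¬ G.Adj a b) ∨ (¬(G.Adj v a ∧ G.Adj v b) ∧ G.Adj a b)
  symm := by
    constructor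
    intro a b h
    cases h with
    | inl h => exact Or.inl ⟨h.2.1, h.1, Ne.symm h.2.2.1, fun hba => h.2.2.2 hba.symm⟩
    | inr h => exact Or.inr ⟨fun hc => h.1 ⟨hc.2, hc.1⟩, h.2.symm⟩
  loopless := by
    constructor
    intro a h
    cases h with
    | inl h => exact h.2.2.1 rfl
    | inr h => exact G.irrefl h.2

/-- `G` is `k`-vertex-minor universal: every graph on every `k`-element subset `W`
of its vertices is a vertex-minor of `G`, i.e. can be induced on `W` by local
complementations (followed by deletion of the vertices outside `W`). -/
def IsVertexMinorUniversal {V : Type*} (G : SimpleGraph V) (k : ℕ) : Prop :=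
  ∀ W : Finset V, W.card = k → ∀ H : SimpleGraph V,
    (∀ a b, H.Adj a b → a ∈ W ∧ b ∈ W) →
    ∃ l : List V, ∀ a ∈ W, ∀ b ∈ W,
      ((List.foldl localComplement G l).Adj a b ↔ H.Adj a b)

/-!
Over `ZMod 2`, local complementation at `v` changes the adjacency matrix off the diagonal by
the rank-one update `N i j ↦ N i j - N i v * N v j` away from row and column `v`. The
matrices `(diag a * Γ + diag b) * (diag c * Γ + diag d)⁻¹` with every
`(a u, b u; c u, d u) ∈ SL₂` are closed under this update (a row operation makes `N v v = 0`,
then a transvection of the bottom rows realizes the update), and off the diagonal they depend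
only on the nonzero bottom rows `(c u, d u)`. Hence at most `3 ^ n` graphs are reachable from
`G`, while universality makes all `2 ^ (k choose 2)` graphs on a `k`-set reachable. So
`k (k - 1) ≤ 2 n log₂ 3`, and both inequalities follow using `log₂ 3 < 2`.
-/

open Matrix

namespace Matrix

variable {V R : Type*} [Fintype V] [DecidableEq V] [CommRing R]

lemma diagonal_add_mul (a δ c : V → R) :
    diagonal (a + δ * c) = diagonal a + diagonal δ * diagonal c := by
  rw [diagonal_mul_diagonal, diagonal_add]; rfl

lemma mul_single_mul_apply (A B : Matrix V V R) (v i j : V) :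
    (A * single v v (1 : R) * B) i j = A i v * B v j := by
  rw [mul_assoc, mul_apply, Finset.sum_eq_single v (fun x _ hx => by simp [hx]) (by simp)]
  simp

end Matrix

section LocalMobius

variable {V R : Type*} [Fintype V] [DecidableEq V] [CommRing R]

/-- Vertex `u` carries the matrix `(a u, b u; c u, d u)`. Over `ZMod 2`, with
`IsUnimodular a b c d`, this is the action of local Clifford operations on the graph state with
adjacency matrix `Γ`. -/
noncomputable def localMobius (Γ : Matrix V V R) (a b c d : V → R) : Matrix V V R :=
  (diagonal a * Γ + diagonal b) * (diagonal c * Γ + diagonal d)⁻¹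

def IsUnimodular (a b c d : V → R) : Prop :=
  ∀ u, a u * d u - b u * c u = 1

variable {Γ : Matrix V V R} {a b c d : V → R}

lemma localMobius_add_diagonal (hM : IsUnit (diagonal c * Γ + diagonal d)) (δ : V → R) :
    localMobius Γ (a + δ * c) (b + δ * d) c d = localMobius Γ a b c d + diagonal δ := by
  have hMM := mul_nonsing_inv _ ((isUnit_iff_isUnit_det _).1 hM)
  have hP : diagonal (a + δ * c) * Γ + diagonal (b + δ * d)
      = diagonal a * Γ + diagonal b + diagonal δ * (diagonal c * Γ + diagonal d) := by
    simp only [diagonal_add_mul]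
    noncomm_ring
  rw [localMobius, localMobius, hP, add_mul, mul_assoc, hMM, mul_one]

lemma localMobius_apply_of_ne {a' b' : V → R} (h : IsUnimodular a b c d)
    (h' : IsUnimodular a' b' c d) (hM : IsUnit (diagonal c * Γ + diagonal d)) {i j : V}
    (hij : i ≠ j) : localMobius Γ a' b' c d i j = localMobius Γ a b c d i j := by
  obtain ⟨δ, rfl, rfl⟩ : ∃ δ, a' = a + δ * c ∧ b' = b + δ * d := by
    refine ⟨a * b' - a' * b, funext fun u => ?_, funext fun u => ?_⟩ <;>
      simp only [Pi.add_apply, Pi.mul_apply, Pi.sub_apply]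
    · linear_combination (-a' u) * h u + a u * h' u
    · linear_combination (-b' u) * h u + b u * h' u
  rw [localMobius_add_diagonal hM, Matrix.add_apply, diagonal_apply_ne _ hij, add_zero]

lemma localMobius_shear (hM : IsUnit (diagonal c * Γ + diagonal d)) {v : V}
    (hv : localMobius Γ a b c d v v = 0) :
    IsUnit (diagonal (c + Pi.single v 1 * a) * Γ + diagonal (d + Pi.single v 1 * b)) ∧
      localMobius Γ a b (c + Pi.single v 1 * a) (d + Pi.single v 1 * b)
        = localMobius Γ a b c d - localMobius Γ a b c d * single v v 1 *
          localMobius Γ a b c d := by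
  have hNM : localMobius Γ a b c d * (diagonal c * Γ + diagonal d)
      = diagonal a * Γ + diagonal b := by
    rw [localMobius, mul_assoc, nonsing_inv_mul _ ((isUnit_iff_isUnit_det _).1 hM), mul_one]
  set N := localMobius Γ a b c d with hN
  set E : Matrix V V R := single v v 1
  have hENE : E * N * E = 0 := by simp [E, hv]
  have hU : (1 + E * N) * (1 - E * N) = 1 := by
    rw [show (1 + E * N) * (1 - E * N) = 1 - E * N * E * N by noncomm_ring, hENE]
    simp
  have hM' : diagonal (c + Pi.single v 1 * a) * Γ + diagonal (d + Pi.single v 1 * b)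
      = (1 + E * N) * (diagonal c * Γ + diagonal d) := by
    rw [add_mul, one_mul, mul_assoc, hNM]
    simp only [diagonal_add_mul, diagonal_single, E]
    noncomm_ring
  refine ⟨hM' ▸ (IsUnit.mul ⟨⟨_, _, hU, mul_eq_one_comm.1 hU⟩, rfl⟩ hM), ?_⟩
  rw [localMobius, hM', Matrix.mul_inv_rev, inv_eq_right_inv hU, ← mul_assoc, hN, localMobius]
  noncomm_ring

lemma exists_localMobius_localComplement_update (h : IsUnimodular a b c d)
    (hM : IsUnit (diagonal c * Γ + diagonal d)) (v : V) :
    ∃ a' b' c' d', IsUnimodular a' b' c' d' ∧ IsUnit (diagonal c' * Γ + diagonal d') ∧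
      ∀ i j, i ≠ j → localMobius Γ a' b' c' d' i j =
        if i = v ∨ j = v then localMobius Γ a b c d i j
        else localMobius Γ a b c d i j -
          localMobius Γ a b c d i v * localMobius Γ a b c d v j := by
  set N := localMobius Γ a b c d
  set δ : V → R := Pi.single v (-N v v)
  have hN₁ : localMobius Γ (a + δ * c) (b + δ * d) c d = N + diagonal δ :=
    localMobius_add_diagonal hM δ
  have hN₁v : (N + diagonal δ) v v = 0 := by simp [δ]
  have hN₁_of_ne {i j : V} (hij : i ≠ j) : (N + diagonal δ) i j = N i j := by
    simp [diagonal_apply_ne _ hij]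
  obtain ⟨hM', hshear⟩ := localMobius_shear hM (hN₁ ▸ hN₁v)
  refine ⟨a + δ * c, b + δ * d, _, _, fun u => ?_, hM', fun i j hij => ?_⟩
  · simp only [Pi.add_apply, Pi.mul_apply]
    linear_combination h u
  rw [hshear, hN₁, Matrix.sub_apply, mul_single_mul_apply, hN₁_of_ne hij]
  split_ifs with hv
  · rcases hv with rfl | rfl <;> simp [hN₁v]
  · obtain ⟨hiv, hjv⟩ := not_or.mp hv
    rw [hN₁_of_ne hiv, hN₁_of_ne (Ne.symm hjv)]

end LocalMobius

section LocalComplement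

variable {V : Type*} [DecidableEq V]

lemma adjMatrix_localComplement_apply_of_ne (H : SimpleGraph V) [DecidableRel H.Adj] (v : V)
    [DecidableRel (localComplement H v).Adj] {i j : V} (hij : i ≠ j) :
    (localComplement H v).adjMatrix (ZMod 2) i j =
      if i = v ∨ j = v then H.adjMatrix (ZMod 2) i j
      else H.adjMatrix (ZMod 2) i j - H.adjMatrix (ZMod 2) i v * H.adjMatrix (ZMod 2) v j := by
  simp only [SimpleGraph.adjMatrix_apply]
  by_cases hi : i = v
  · subst hi; simp [localComplement, hij]
  by_cases hj : j = v
  · subst hj; simp [localComplement, hij]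
  simp only [localComplement, hi, hj, or_self, if_false, ne_eq, hij, not_false_eq_true, true_and]
  by_cases h1 : H.Adj i v <;> by_cases h2 : H.Adj v j <;> by_cases h3 : H.Adj i j <;>
    simp [h1, h2, h3, H.adj_comm v i]

open scoped Classical in
lemma exists_localMobius_foldl_localComplement [Fintype V] (G : SimpleGraph V) (l : List V) :
    ∃ a b c d : V → ZMod 2, IsUnimodular a b c d ∧
      IsUnit (diagonal c * G.adjMatrix (ZMod 2) + diagonal d) ∧
      ∀ i j, i ≠ j → (l.foldl localComplement G).adjMatrix (ZMod 2) i j =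
        localMobius (G.adjMatrix (ZMod 2)) a b c d i j := by
  induction l using List.reverseRecOn with
  | nil =>
    refine ⟨1, 0, 0, 1, fun u => by simp, by simp, fun i j _ => ?_⟩
    have h0 : diagonal (0 : V → ZMod 2) = 0 := diagonal_zero
    have h1 : diagonal (1 : V → ZMod 2) = 1 := diagonal_one
    simp only [localMobius, h0, h1, zero_mul, zero_add, one_mul, add_zero, inv_one, mul_one,
      List.foldl_nil]
    rfl
  | append_singleton l v ih =>
    obtain ⟨a, b, c, d, h, hM, hl⟩ := ih
    obtain ⟨a', b', c', d', h', hM', hstep⟩ := exists_localMobius_localComplement_update h hM v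
    refine ⟨a', b', c', d', h', hM', fun i j hij => ?_⟩
    rw [List.foldl_append, List.foldl_cons, List.foldl_nil,
      adjMatrix_localComplement_apply_of_ne _ v hij, hstep i j hij]
    split_ifs with hv
    · exact hl i j hij
    · obtain ⟨hiv, hjv⟩ := not_or.mp hv
      rw [hl i j hij, hl i v hiv, hl v j (Ne.symm hjv)]

lemma SimpleGraph.eq_of_adjMatrix_apply_of_ne {α : Type*} [Zero α] [One α] [NeZero (1 : α)]
    {G H : SimpleGraph V} [DecidableRel G.Adj] [DecidableRel H.Adj]
    (h : ∀ i j, i ≠ j → G.adjMatrix α i j = H.adjMatrix α i j) : G = H := by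
  ext i j
  by_cases hij : i = j
  · subst hij; simp
  have hij' := h i j hij
  simp only [SimpleGraph.adjMatrix_apply] at hij'
  by_cases hG : G.Adj i j <;> by_cases hH : H.Adj i j <;> simp_all

open scoped Classical in
theorem card_range_foldl_localComplement_le [Fintype V] (G : SimpleGraph V) :
    Nat.card (Set.range (List.foldl localComplement G)) ≤ 3 ^ Fintype.card V := by
  have hrep (R : Set.range (List.foldl localComplement G)) :
      ∃ a b c d : V → ZMod 2, IsUnimodular a b c d ∧
        IsUnit (diagonal c * G.adjMatrix (ZMod 2) + diagonal d) ∧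
        ∀ i j, i ≠ j → R.1.adjMatrix (ZMod 2) i j =
          localMobius (G.adjMatrix (ZMod 2)) a b c d i j := by
    obtain ⟨_, l, rfl⟩ := R
    exact exists_localMobius_foldl_localComplement G l
  choose a b c d h hM hR using hrep
  have hcd (R u) : (c R u, d R u) ≠ 0 := by
    intro hz
    have := h R u
    simp_all [Prod.ext_iff]
  let F (R : Set.range (List.foldl localComplement G)) (u : V) :
      {p : ZMod 2 × ZMod 2 // p ≠ 0} := ⟨(c R u, d R u), hcd R u⟩
  have hF : Function.Injective F := by
    intro R₁ R₂ hF
    have hc : c R₂ = c R₁ := funext fun u => congrArg (fun p => p.1.1) (congrFun hF u).symm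
    have hd : d R₂ = d R₁ := funext fun u => congrArg (fun p => p.1.2) (congrFun hF u).symm
    refine Subtype.ext (SimpleGraph.eq_of_adjMatrix_apply_of_ne (α := ZMod 2) fun i j hij => ?_)
    have h₂ : IsUnimodular (a R₂) (b R₂) (c R₁) (d R₁) := hc ▸ hd ▸ h R₂
    rw [hR _ _ _ hij, hR _ _ _ hij, hc, hd, localMobius_apply_of_ne (h R₁) h₂ (hM R₁) hij]
  calc Nat.card (Set.range (List.foldl localComplement G))
      ≤ Nat.card (V → {p : ZMod 2 × ZMod 2 // p ≠ 0}) := Nat.card_le_card_of_injective F hF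
    _ = 3 ^ Fintype.card V := by
      rw [Nat.card_fun, Nat.card_eq_fintype_card, Nat.card_eq_fintype_card]; rfl

end LocalComplement

lemma two_pow_choose_two_le_card_simpleGraph (W : Type*) [Fintype W] :
    2 ^ (Fintype.card W).choose 2 ≤ Nat.card (SimpleGraph W) := by
  classical
  rw [← Sym2.card_subtype_not_diag, ← Fintype.card_set, ← Nat.card_eq_fintype_card]
  refine Nat.card_le_card_of_injective
    (fun s => SimpleGraph.fromEdgeSet (Subtype.val '' s)) fun s t hst => ?_
  have hst' := congrArg SimpleGraph.edgeSet hst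
  simp only [SimpleGraph.edgeSet_fromEdgeSet] at hst'
  ext e
  simpa [e.2] using Set.ext_iff.1 hst' e.1

theorem IsVertexMinorUniversal.two_pow_choose_two_le {V : Type*} [Fintype V]
    {G : SimpleGraph V} {k : ℕ} (h : IsVertexMinorUniversal G k) (hk : k ≤ Fintype.card V) :
    2 ^ k.choose 2 ≤ 3 ^ Fintype.card V := by
  classical
  obtain ⟨W, -, hW⟩ := Finset.exists_subset_card_eq (s := Finset.univ) hk
  have hrealize (g : SimpleGraph W) : ∃ R ∈ Set.range (List.foldl localComplement G),
      R.comap (Function.Embedding.subtype _) = g := by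
    obtain ⟨l, hl⟩ := h W hW (g.map (Function.Embedding.subtype _))
      fun a b hab => by
        obtain ⟨a', b', -, rfl, rfl⟩ := (SimpleGraph.map_adj _ _ _ _).1 hab
        exact ⟨a'.2, b'.2⟩
    refine ⟨_, ⟨l, rfl⟩, ?_⟩
    ext a b
    rw [SimpleGraph.comap_adj, Function.Embedding.coe_subtype, hl a a.2 b b.2]
    exact SimpleGraph.map_adj_apply
  choose R hR hRg using hrealize
  calc 2 ^ k.choose 2 ≤ Nat.card (SimpleGraph W) := by
        simpa [hW] using two_pow_choose_two_le_card_simpleGraph W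
    _ ≤ Nat.card (Set.range (List.foldl localComplement G)) :=
        Nat.card_le_card_of_injective (fun g => ⟨R g, hR g⟩) fun g₁ g₂ hg => by
          rw [← hRg g₁, ← hRg g₂]
          exact congrArg (fun R => R.1.comap (Function.Embedding.subtype _)) hg
    _ ≤ 3 ^ Fintype.card V := card_range_foldl_localComplement_le G

lemma mul_sub_one_le_of_two_pow_choose_two_le {k n : ℕ} (h : 2 ^ k.choose 2 ≤ 3 ^ n) :
    (k : ℝ) * (k - 1) ≤ 2 * n * Real.logb 2 3 := by
  have hlog := Real.logb_le_logb_of_le (b := 2) (by norm_num) (by positivity)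
    (show (2 : ℝ) ^ k.choose 2 ≤ (3 : ℝ) ^ n by exact_mod_cast h)
  rw [Real.logb_pow, Real.logb_pow, Real.logb_self_eq_one (by norm_num),
    Nat.cast_choose_two] at hlog
  linarith

lemma lt_sqrt_add_two_of_mul_sub_one_le {k x : ℝ} (h : k * (k - 1) ≤ x) :
    k < √x + 2 := by
  rcases lt_or_ge k 2 with hk2 | hk2
  · linarith [Real.sqrt_nonneg x]
  · linarith [Real.lt_sqrt_of_sq_lt (show (k - 2) ^ 2 < x by nlinarith)]

lemma logb_two_three_lt_two : Real.logb 2 3 < 2 := by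
  rw [Real.logb_lt_iff_lt_rpow (by norm_num) (by norm_num)]
  norm_num

/-- If a graph of order `n` is `k`-vertex-minor universal, then
`3^(n-k) ≥ 2^((k²-5k)/2 - 1)`, and consequently `k < √(2n·log₂3) + 2`. -/
theorem stmt_14 {V : Type*} [Fintype V] (n k : ℕ) (hn : Fintype.card V = n)
    (hkn : k ≤ n) (G : SimpleGraph V) (h : IsVertexMinorUniversal G k) :
    (2 : ℝ) ^ (((k : ℝ) ^ 2 - 5 * k) / 2 - 1) ≤ (3 : ℝ) ^ ((n : ℝ) - k) ∧
      (k : ℝ) < Real.sqrt (2 * n * Real.logb 2 3) + 2 := by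
  subst hn
  have hcount := mul_sub_one_le_of_two_pow_choose_two_le (h.two_pow_choose_two_le hkn)
  refine ⟨?_, lt_sqrt_add_two_of_mul_sub_one_le hcount⟩
  rw [← Real.rpow_logb (b := 2) (x := 3) (by norm_num) (by norm_num) (by norm_num),
    ← Real.rpow_mul (by norm_num)]
  refine Real.rpow_le_rpow_of_exponent_le (by norm_num) ?_
  nlinarith [logb_two_three_lt_two, k.cast_nonneg (α := ℝ)]
end

section
/- If a graph G is k-vertex-minor universal, then k < δ_loc(G) + 2, where δ_loc(G) is the local minimum degree of G. -/
/-- The local minimum degree of `G`: the minimum vertex degree over all graphs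
obtainable from `G` by sequences of local complementations. -/
noncomputable def localMinDegree {V : Type*} (G : SimpleGraph V) : ℕ :=
  sInf {d : ℕ | ∃ (l : List V) (v : V),
    ((List.foldl localComplement G l).neighborSet v).ncard = d}

/-! If `δ = δ_loc(G)` is attained at a vertex `v` of a graph locally equivalent to `G`, the closed
neighbourhood `L = {v} ∪ Odd({v})` is a local set of size `δ + 1`, and local sets are invariant
under local complementation. If `k ≥ δ + 2`, pick `u ∉ L` and a `k`-set `W ⊇ L ∪ {u}`; universality
gives a graph locally equivalent to `G` whose restriction to `W` is the single edge `uv`. There `L`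
is independent, so a witness `D ⊆ L` of `L` has no odd neighbours inside `L`, forcing `D = L`; but
`u` has exactly one neighbour in `L`, so `u ∈ Odd(L) ⊆ L`. -/

open Finset SimpleGraph

section LocalSet

open Classical

variable {V : Type*}

/-- `nbrParity G D w = 1` says that `w` lies in the odd neighbourhood `Odd_G(D)`. -/
noncomputable def nbrParity (G : SimpleGraph V) (D : Finset V) (w : V) : ZMod 2 :=
  ∑ x ∈ D, G.adjMatrix (ZMod 2) w x

/-- `L = D ∪ Odd_G(D)` for a nonempty `D`. -/
def IsLocalSet (G : SimpleGraph V) (L : Finset V) : Prop :=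
  ∃ D : Finset V, D.Nonempty ∧ ∀ w, w ∈ L ↔ w ∈ D ∨ nbrParity G D w = 1

lemma localComplement_localComplement (G : SimpleGraph V) (v : V) :
    localComplement (localComplement G v) v = G := by
  ext a b
  simp only [localComplement]
  by_cases hva : G.Adj v a <;> by_cases hvb : G.Adj v b <;> by_cases hab : a = b <;>
    by_cases h : G.Adj a b <;> simp_all

lemma adjMatrix_localComplement (G : SimpleGraph V) (v w x : V) :
    (localComplement G v).adjMatrix (ZMod 2) w x = G.adjMatrix (ZMod 2) w x +
      G.adjMatrix (ZMod 2) v w * (G.adjMatrix (ZMod 2) v x + if x = w then 1 else 0) := by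
  by_cases hxw : x = w
  · subst hxw
    by_cases h : G.Adj v x <;> simp [h, CharTwo.add_self_eq_zero]
  · by_cases hvw : G.Adj v w <;> by_cases hvx : G.Adj v x <;> by_cases hwx : G.Adj w x <;>
      simp [localComplement, hvw, hvx, hwx, hxw, Ne.symm hxw, CharTwo.add_self_eq_zero]

lemma nbrParity_localComplement (G : SimpleGraph V) (v : V) (D : Finset V) (w : V) :
    nbrParity (localComplement G v) D w =
      nbrParity G D w + G.adjMatrix (ZMod 2) v w * (nbrParity G D v + if w ∈ D then 1 else 0) := by
  simp only [nbrParity, adjMatrix_localComplement, sum_add_distrib, ← mul_sum, sum_ite_eq']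

lemma sum_symmDiff_singleton (D : Finset V) (v : V) (f : V → ZMod 2) :
    ∑ x ∈ symmDiff D {v}, f x = ∑ x ∈ D, f x + f v := by
  by_cases hv : v ∈ D
  · have hD : symmDiff D {v} = D.erase v := by
      ext x; by_cases hx : x = v <;> simp [mem_symmDiff, hx, hv]
    rw [hD, ← sum_erase_add D f hv, add_assoc, CharTwo.add_self_eq_zero, add_zero]
  · have hD : symmDiff D {v} = insert v D := by
      ext x; by_cases hx : x = v <;> simp [mem_symmDiff, hx, hv]
    rw [hD, sum_insert hv, add_comm]

lemma exists_union_nbrParity_localComplement (G : SimpleGraph V) (v : V) (D : Finset V) :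
    ∃ D' : Finset V, ∀ w,
      (w ∈ D' ∨ nbrParity (localComplement G v) D' w = 1) ↔ (w ∈ D ∨ nbrParity G D w = 1) := by
  rcases (by decide : ∀ a : ZMod 2, a = 0 ∨ a = 1) (nbrParity G D v) with hv | hv
  · refine ⟨D, fun w => ?_⟩
    rw [nbrParity_localComplement, hv, zero_add]
    by_cases hw : w ∈ D <;> simp [hw]
  · -- as `v ∈ Odd(D)`, toggling `v` in `D` undoes the parity change at the neighbours of `v`
    refine ⟨symmDiff D {v}, fun w => ?_⟩
    have hpar : nbrParity (localComplement G v) (symmDiff D {v}) w =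
        nbrParity G D w + G.adjMatrix (ZMod 2) v w * if w ∈ D then 1 else 0 := by
      rw [nbrParity, sum_symmDiff_singleton, ← nbrParity, nbrParity_localComplement, hv,
        adjMatrix_localComplement]
      by_cases hwv : w = v
      · subst hwv; simp
      · simp only [adjMatrix_apply, G.irrefl, if_false, if_neg (Ne.symm hwv), G.adj_comm w v]
        by_cases hvw : G.Adj v w <;> by_cases hw : w ∈ D <;>
          simp [hvw, hw, add_assoc, CharTwo.add_self_eq_zero]
    by_cases hwv : w = v
    · subst hwv
      simp [hpar, hv]
    · have hmem : w ∈ symmDiff D {v} ↔ w ∈ D := by simp [mem_symmDiff, hwv]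
      rw [hmem, hpar]
      by_cases hw : w ∈ D <;> simp [hw]

lemma isLocalSet_localComplement {G : SimpleGraph V} {L : Finset V} (hL : IsLocalSet G L)
    (v : V) : IsLocalSet (localComplement G v) L := by
  obtain ⟨D, ⟨x, hx⟩, hD⟩ := hL
  obtain ⟨D', hD'⟩ := exists_union_nbrParity_localComplement G v D
  refine ⟨D', nonempty_iff_ne_empty.mpr ?_, fun w => (hD w).trans (hD' w).symm⟩
  rintro rfl
  simpa [nbrParity] using (hD' x).2 (Or.inl hx)

lemma isLocalSet_localComplement_iff {G : SimpleGraph V} {v : V} {L : Finset V} :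
    IsLocalSet (localComplement G v) L ↔ IsLocalSet G L :=
  ⟨fun h => localComplement_localComplement G v ▸ isLocalSet_localComplement h v,
    fun h => isLocalSet_localComplement h v⟩

lemma isLocalSet_foldl_localComplement_iff {G : SimpleGraph V} {L : Finset V} (l : List V) :
    IsLocalSet (l.foldl localComplement G) L ↔ IsLocalSet G L := by
  induction l generalizing G with
  | nil => rfl
  | cons v l ih => exact ih.trans isLocalSet_localComplement_iff

lemma isLocalSet_insert_neighborFinset (G : SimpleGraph V) (v : V) [Fintype (G.neighborSet v)] :
    IsLocalSet G (insert v (G.neighborFinset v)) :=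
  ⟨{v}, singleton_nonempty v, fun w => by
    by_cases h : G.Adj v w <;>
      simp only [nbrParity, sum_singleton, adjMatrix_apply, mem_insert, mem_neighborFinset,
        G.adj_comm w v, h] <;> simp⟩

lemma IsLocalSet.mem_of_nbrParity_eq_one {G : SimpleGraph V} {L : Finset V} (hL : IsLocalSet G L)
    (hind : G.IsIndepSet L) {u : V} (hu : nbrParity G L u = 1) : u ∈ L := by
  obtain ⟨D, -, hD⟩ := hL
  have hDL : D ⊆ L := fun x hx => (hD x).2 (Or.inl hx)
  -- no vertex of `L` has a neighbour in `D ⊆ L`, so none lies in `Odd(D)`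
  have hDeq : D = L := by
    refine hDL.antisymm fun a ha => ((hD a).1 ha).resolve_right ?_
    rw [nbrParity, sum_eq_zero fun x hx => ?_]
    · decide
    · have : ¬ G.Adj a x := fun hax => hind ha (hDL hx) hax.ne hax
      simp [adjMatrix_apply, this]
  exact (hD u).2 (Or.inr (hDeq ▸ hu))

lemma exists_isLocalSet_card_eq_localMinDegree_add_one [Finite V] [Nonempty V]
    (G : SimpleGraph V) : ∃ L : Finset V, IsLocalSet G L ∧ #L = localMinDegree G + 1 := by
  have : Fintype V := Fintype.ofFinite V
  obtain ⟨l, v, hv⟩ := Nat.sInf_mem (⟨_, [], Classical.arbitrary V, rfl⟩ :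
    {d : ℕ | ∃ (l : List V) (v : V), ((l.foldl localComplement G).neighborSet v).ncard = d}.Nonempty)
  refine ⟨insert v ((l.foldl localComplement G).neighborFinset v),
    (isLocalSet_foldl_localComplement_iff l).mp (isLocalSet_insert_neighborFinset _ v), ?_⟩
  rw [card_insert_of_notMem (notMem_neighborFinset_self _ _), localMinDegree, ← hv,
    neighborFinset_def, Set.ncard_eq_toFinset_card']

end LocalSet

/-- If a graph `G` is `k`-vertex-minor universal then `k < δ_loc(G) + 2`. -/
theorem stmt_15 {V : Type*} [Fintype V] [Nonempty V] (G : SimpleGraph V) (k : ℕ)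
    (hk : k ≤ Fintype.card V) (h : IsVertexMinorUniversal G k) :
    k < localMinDegree G + 2 := by
  classical
  by_contra! hδk
  obtain ⟨L, hL, hLcard⟩ := exists_isLocalSet_card_eq_localMinDegree_add_one G
  obtain ⟨v, hv⟩ : L.Nonempty := card_pos.mp (by omega)
  obtain ⟨u, -, hu⟩ := exists_mem_notMem_of_card_lt_card (s := L) (t := univ) (by simp; omega)
  obtain ⟨W, huLW, -, hW⟩ :=
    exists_subsuperset_card_eq (n := k) (subset_univ (insert u L)) (by simp [hu]; omega) (by simpa)
  have hLW : L ⊆ W := (subset_insert u L).trans huLW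
  have huW : u ∈ W := huLW (mem_insert_self u L)
  have hvu : v ≠ u := ne_of_mem_of_not_mem hv hu
  obtain ⟨l, hl⟩ := h W hW (edge v u) fun a b hab => by
    rcases (edge_adj v u a b).mp hab with ⟨⟨rfl, rfl⟩ | ⟨rfl, rfl⟩, -⟩ <;> simp [hLW hv, huW]
  set G' := l.foldl localComplement G
  have hadjL : ∀ a ∈ L, ∀ b ∈ W, G'.Adj a b ↔ a = v ∧ b = u := fun a ha b hb => by
    have hau : a ≠ u := ne_of_mem_of_not_mem ha hu
    rw [hl a (hLW ha) b hb, edge_adj]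
    grind
  have hind : G'.IsIndepSet L := fun a ha b hb _ hab =>
    hu (((hadjL a ha b (hLW hb)).mp hab).2 ▸ hb)
  have hpar : nbrParity G' L u = 1 :=
    calc nbrParity G' L u = ∑ x ∈ L, if x = v then 1 else 0 := sum_congr rfl fun x hx => by
          simp [adjMatrix_apply, G'.adj_comm u x, hadjL x hx u huW]
      _ = 1 := by simp [hv]
  exact hu (((isLocalSet_foldl_localComplement_iff l).mpr hL).mem_of_nbrParity_eq_one hind hpar)
end
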